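/- arXiv:2505.02487 — 5 statements merged into one kernel-verified Lean document; each statement's English description precedes it below -/
import Mathlib

section
/- Pinching decreases the Petz Rényi entropy: Let ρ, σ be faithful states in M_d(ℂ) and s > 0. Then D_{1+s}(ρ||σ) ≥ D_{1+s}(κ_σ(ρ)||σ). -/
open Matrix Filter
open scoped Kronecker ComplexOrder

noncomputable section

/-- A faithful state: positive definite with trace one. -/
def IsFaithfulState {n : Type*} [Fintype n] [DecidableEq n] (ρ : Matrix n n ℂ) : Prop :=
  ρ.PosDef ∧ ρ.trace = 1

/-- Functional calculus `f(A)` on Hermitian matrices. -/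
noncomputable def matFun {n : Type*} [Fintype n] [DecidableEq n]
    (f : ℝ → ℝ) (A : Matrix n n ℂ) : Matrix n n ℂ :=
  cfc f A

/-- Matrix logarithm via functional calculus. -/
noncomputable def matLog {n : Type*} [Fintype n] [DecidableEq n]
    (A : Matrix n n ℂ) : Matrix n n ℂ :=
  matFun Real.log A

/-- Real matrix power via functional calculus. -/
noncomputable def matRpow {n : Type*} [Fintype n] [DecidableEq n]
    (A : Matrix n n ℂ) (t : ℝ) : Matrix n n ℂ :=
  matFun (fun x => x ^ t) A

/-- Quantum relative entropy `D(ρ‖σ) = Tr (ρ (log ρ - log σ))`. -/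
noncomputable def relEnt {n : Type*} [Fintype n] [DecidableEq n]
    (ρ σ : Matrix n n ℂ) : ℝ :=
  (ρ * (matLog ρ - matLog σ)).trace.re

/-- Petz relative Rényi entropy `D_{1+s}(ρ‖σ)`. -/
noncomputable def petzRenyi {n : Type*} [Fintype n] [DecidableEq n]
    (s : ℝ) (ρ σ : Matrix n n ℂ) : ℝ :=
  s⁻¹ * Real.log ((matRpow ρ (1 + s) * matRpow σ (-s)).trace.re)

/-- Sandwiched relative Rényi entropy `D̃_{1+s}(ρ‖σ)`. -/
noncomputable def sandRenyi {n : Type*} [Fintype n] [DecidableEq n]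
    (s : ℝ) (ρ σ : Matrix n n ℂ) : ℝ :=
  s⁻¹ * Real.log
    ((matRpow (matRpow σ (-s / (2 * (1 + s))) * ρ * matRpow σ (-s / (2 * (1 + s)))) (1 + s)).trace.re)

/-- von Neumann entropy. -/
noncomputable def vNEnt {n : Type*} [Fintype n] [DecidableEq n]
    (τ : Matrix n n ℂ) : ℝ :=
  -(τ * matLog τ).trace.re

/-- `n`-fold Kronecker (tensor) power of a `d × d` matrix, indexed by `Fin n → Fin d`. -/
noncomputable def kronPow {d : ℕ} (A : Matrix (Fin d) (Fin d) ℂ) (n : ℕ) :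
    Matrix (Fin n → Fin d) (Fin n → Fin d) ℂ :=
  Matrix.of fun i j => ∏ k, A (i k) (j k)

/-- The set of distinct eigenvalues of a Hermitian matrix. -/
noncomputable def distinctEigs {n : Type*} [Fintype n] [DecidableEq n]
    (A : Matrix n n ℂ) : Finset ℝ :=
  if h : A.IsHermitian then Finset.image h.eigenvalues Finset.univ else ∅

/-- Spectral projection of `A` associated with the eigenvalue `μ`. -/
noncomputable def specProj {n : Type*} [Fintype n] [DecidableEq n]
    (A : Matrix n n ℂ) (μ : ℝ) : Matrix n n ℂ :=
  matFun (fun x => if x = μ then 1 else 0) A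

/-- The pinching map determined by the spectral projections of `σ`. -/
noncomputable def pinch {n : Type*} [Fintype n] [DecidableEq n]
    (σ X : Matrix n n ℂ) : Matrix n n ℂ :=
  ∑ μ ∈ distinctEigs σ, specProj σ μ * X * specProj σ μ

/-- A POVM: a finite family of positive semidefinite matrices summing to the identity. -/
def IsPOVM {n : Type*} [Fintype n] [DecidableEq n] {ι : Type*} [Fintype ι]
    (M : ι → Matrix n n ℂ) : Prop :=
  (∀ i, (M i).PosSemidef) ∧ ∑ i, M i = 1

/-- Outcome distribution of a POVM on a state. -/
noncomputable def outDist {n : Type*} [Fintype n] [DecidableEq n] {ι : Type*} [Fintype ι]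
    (M : ι → Matrix n n ℂ) (ρ : Matrix n n ℂ) : ι → ℝ :=
  fun i => ((ρ * M i).trace).re

/-- Classical relative Rényi entropy of two distributions on a finite set. -/
noncomputable def classRenyi {ι : Type*} [Fintype ι] (s : ℝ) (p q : ι → ℝ) : ℝ :=
  s⁻¹ * Real.log (∑ i, p i ^ (1 + s) * q i ^ (-s))

/-- The extension `κ ⊗ id_m` of a linear map on matrices, acting blockwise. -/
noncomputable def kronExt {d : ℕ}
    (κ : Matrix (Fin d) (Fin d) ℂ →ₗ[ℂ] Matrix (Fin d) (Fin d) ℂ) (m : ℕ)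
    (X : Matrix (Fin d × Fin m) (Fin d × Fin m) ℂ) :
    Matrix (Fin d × Fin m) (Fin d × Fin m) ℂ :=
  Matrix.of fun p q => κ (Matrix.of fun a c => X (a, p.2) (c, q.2)) p.1 q.1

/-- Trace preserving and completely positive linear map. -/
def IsTPCP {d : ℕ}
    (κ : Matrix (Fin d) (Fin d) ℂ →ₗ[ℂ] Matrix (Fin d) (Fin d) ℂ) : Prop :=
  (∀ X, (κ X).trace = X.trace) ∧
  (∀ m : ℕ, 1 ≤ m → ∀ X : Matrix (Fin d × Fin m) (Fin d × Fin m) ℂ,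
      X.PosSemidef → (kronExt κ m X).PosSemidef)

/-- Optimal type-II error under the type-I error constraint `ε` in hypothesis testing. -/
noncomputable def steinBeta {d : ℕ} (ρ σ : Matrix (Fin d) (Fin d) ℂ) (ε : ℝ) (n : ℕ) : ℝ :=
  sInf { x : ℝ | ∃ T : Matrix (Fin n → Fin d) (Fin n → Fin d) ℂ,
      T.PosSemidef ∧ (1 - T).PosSemidef ∧
      ((kronPow ρ n) * (1 - T)).trace.re ≤ ε ∧
      x = ((kronPow σ n) * T).trace.re }

/-!
Since `κ_σ(ρ)` commutes with `σ`, there is an orthonormal basis `(b i)` of common eigenvectors,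
`σ b i = t i • b i`. Each `b i` lies in one eigenspace of `σ`, so pinching does not change its
expectation: `⟨b i, κ_σ(ρ) b i⟩ = ⟨b i, ρ b i⟩ =: q i`. In this basis
`Tr κ_σ(ρ)^(1+s) σ^(-s) = ∑ t i ^ (-s) * q i ^ (1+s)` and
`Tr ρ^(1+s) σ^(-s) = ∑ t i ^ (-s) * ⟨b i, ρ^(1+s) b i⟩`, and the sums compare termwise by
Jensen's inequality for the convex function `x ^ (1+s)` and the spectral distribution of `ρ` in
the state `b i`.
-/

section JointEigenbasis
open Module Module.End

variable {𝕜 E : Type*} [RCLike 𝕜] [NormedAddCommGroup E] [InnerProductSpace 𝕜 E]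
  [FiniteDimensional 𝕜 E] {A B : E →ₗ[𝕜] E}

theorem LinearMap.IsSymmetric.exists_orthonormalBasis_apply_eq_smul_of_commute
    (hA : A.IsSymmetric) (hB : B.IsSymmetric) (hAB : Commute A B) :
    ∃ (b : OrthonormalBasis (Fin (finrank 𝕜 E)) 𝕜 E) (a β : Fin (finrank 𝕜 E) → ℝ),
      ∀ i, A (b i) = (a i : 𝕜) • b i ∧ B (b i) = (β i : 𝕜) • b i := by
  classical
  -- collect eigenbases of `A` restricted to the eigenspaces of `B`, which `A` preserves
  have hinv (μ : Eigenvalues B) : ∀ v ∈ eigenspace B μ, A v ∈ eigenspace B μ := fun v hv => by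
    rw [mem_eigenspace_iff] at hv ⊢
    rw [← Module.End.mul_apply, ← hAB.eq, Module.End.mul_apply, hv, map_smul]
  let v (μ : Eigenvalues B) := (hA.restrict_invariant (hinv μ)).eigenvectorBasis rfl
  let c := hB.direct_sum_isInternal.collectedOrthonormalBasis hB.orthogonalFamily_eigenspaces' v
  have hc (j) : c j = v j.1 j.2 := by simp [c, DirectSum.IsInternal.collectedOrthonormalBasis]
  let e := Fintype.equivFinOfCardEq (finrank_eq_card_basis c.toBasis).symm
  refine ⟨c.reindex e,
    fun i => (hA.restrict_invariant (hinv (e.symm i).1)).eigenvalues rfl (e.symm i).2,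
    fun i => RCLike.re ((e.symm i).1 : 𝕜), fun i => ⟨?_, ?_⟩⟩
  · rw [c.reindex_apply, hc]
    exact congrArg Subtype.val
      ((hA.restrict_invariant (hinv (e.symm i).1)).apply_eigenvectorBasis rfl (e.symm i).2)
  · have hre : ((RCLike.re ((e.symm i).1 : 𝕜) : ℝ) : 𝕜) = (e.symm i).1 :=
      RCLike.conj_eq_iff_re.mp (hB.conj_eigenvalue_eq_self (e.symm i).1.2)
    rw [hre, c.reindex_apply, hc, ← mem_eigenspace_iff]
    exact (v _ _).2

end JointEigenbasis

theorem OrthonormalBasis.star_dotProduct_self {ι n 𝕜 : Type*} [RCLike 𝕜] [Fintype ι] [Fintype n]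
    (b : OrthonormalBasis ι 𝕜 (EuclideanSpace 𝕜 n)) (i : ι) : star ⇑(b i) ⬝ᵥ ⇑(b i) = 1 := by
  rw [dotProduct_comm, ← EuclideanSpace.inner_eq_star_dotProduct, b.inner_eq_one]

namespace Matrix

variable {n 𝕜 : Type*} [RCLike 𝕜] [Fintype n] [DecidableEq n] {A B : Matrix n n 𝕜}

theorem IsHermitian.exists_orthonormalBasis_mulVec_eq_smul_of_commute (hA : A.IsHermitian)
    (hB : B.IsHermitian) (hAB : Commute A B) :
    ∃ (b : OrthonormalBasis n 𝕜 (EuclideanSpace 𝕜 n)) (a β : n → ℝ),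
      ∀ i, A *ᵥ b i = (a i : 𝕜) • ⇑(b i) ∧ B *ᵥ b i = (β i : 𝕜) • ⇑(b i) := by
  obtain ⟨b, a, β, hb⟩ :=
    LinearMap.IsSymmetric.exists_orthonormalBasis_apply_eq_smul_of_commute
      (isSymmetric_toEuclideanLin_iff.mpr hA) (isSymmetric_toEuclideanLin_iff.mpr hB)
      (hAB.map (toLpLinAlgEquiv 2))
  let e : Fin (Module.finrank 𝕜 (EuclideanSpace 𝕜 n)) ≃ n :=
    Fintype.equivOfCardEq (by rw [Fintype.card_fin, finrank_euclideanSpace])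
  refine ⟨b.reindex e, a ∘ e.symm, β ∘ e.symm, fun i => ?_⟩
  obtain ⟨hAi, hBi⟩ := hb (e.symm i)
  simp only [b.reindex_apply, Function.comp_apply]
  exact ⟨congrArg WithLp.ofLp hAi, congrArg WithLp.ofLp hBi⟩

theorem trace_eq_sum_star_dotProduct_mulVec {ι : Type*} [Fintype ι] (X : Matrix n n 𝕜)
    (b : OrthonormalBasis ι 𝕜 (EuclideanSpace 𝕜 n)) :
    X.trace = ∑ i, star ⇑(b i) ⬝ᵥ (X *ᵥ ⇑(b i)) := by
  have h := LinearMap.trace_eq_sum_inner (toEuclideanLin X) b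
  rw [toEuclideanLin, toLpLin_eq_toLin, trace_toLin_eq] at h
  rw [h]
  refine Finset.sum_congr rfl fun i _ => ?_
  rw [EuclideanSpace.inner_eq_star_dotProduct, dotProduct_comm]
  rfl

theorem IsHermitian.cfc_mulVec_of_mulVec_eq_smul (hA : A.IsHermitian) {v : n → 𝕜} {μ : ℝ}
    (hv : A *ᵥ v = (μ : 𝕜) • v) (f : ℝ → ℝ) : cfc f A *ᵥ v = (f μ : 𝕜) • v := by
  set U : Matrix n n 𝕜 := ↑hA.eigenvectorUnitary
  set c := star U *ᵥ v
  have hc : diagonal (RCLike.ofReal ∘ hA.eigenvalues) *ᵥ c = (μ : 𝕜) • c := by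
    rw [← hA.conjStarAlgAut_star_eigenvectorUnitary, Unitary.conjStarAlgAut_apply]
    have hUU : U * star U = 1 := Unitary.mul_star_self_of_mem hA.eigenvectorUnitary.2
    simp only [Unitary.coe_star, star_star, c, U] at hUU ⊢
    rw [mulVec_mulVec, Matrix.mul_assoc, Matrix.mul_assoc, hUU, Matrix.mul_one, ← mulVec_mulVec,
      hv, mulVec_smul]
  have hfc : diagonal (RCLike.ofReal ∘ f ∘ hA.eigenvalues) *ᵥ c = (f μ : 𝕜) • c := by
    ext k
    have hk := congrFun hc k
    simp only [mulVec_diagonal, Pi.smul_apply, smul_eq_mul, Function.comp_apply] at hk ⊢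
    by_cases h0 : c k = 0
    · simp [h0]
    · rw [RCLike.ofReal_inj.mp (mul_right_cancel₀ h0 hk)]
  rw [hA.cfc_eq, IsHermitian.cfc, Unitary.conjStarAlgAut_apply, ← mulVec_mulVec, ← mulVec_mulVec,
    hfc, mulVec_smul, mulVec_mulVec]
  simp [U]

theorem IsHermitian.mem_spectrum_of_mulVec_eq_smul (hA : A.IsHermitian) {v : n → 𝕜} (hv0 : v ≠ 0)
    {μ : ℝ} (hv : A *ᵥ v = (μ : 𝕜) • v) : μ ∈ spectrum ℝ A := by
  -- otherwise the indicator of `{μ}` vanishes on the spectrum, yet its calculus fixes `v`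
  by_contra hμ
  have h0 : cfc (fun x : ℝ => if x = μ then 1 else 0) A = 0 := by
    rw [← cfc_zero ℝ A]
    exact cfc_congr fun x hx => if_neg (ne_of_mem_of_not_mem hx hμ)
  apply hv0
  simpa [h0] using (hA.cfc_mulVec_of_mulVec_eq_smul hv fun x : ℝ => if x = μ then 1 else 0).symm

theorem IsHermitian.re_trace_mul_cfc_eq_sum {ι : Type*} [Fintype ι] (hB : B.IsHermitian)
    (X : Matrix n n 𝕜) (b : OrthonormalBasis ι 𝕜 (EuclideanSpace 𝕜 n)) {β : ι → ℝ}
    (hb : ∀ i, B *ᵥ b i = (β i : 𝕜) • ⇑(b i)) (g : ℝ → ℝ) :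
    RCLike.re (X * cfc g B).trace = ∑ i, g (β i) * RCLike.re (star ⇑(b i) ⬝ᵥ (X *ᵥ b i)) := by
  rw [trace_eq_sum_star_dotProduct_mulVec _ b, map_sum]
  refine Finset.sum_congr rfl fun i _ => ?_
  rw [← mulVec_mulVec, hB.cfc_mulVec_of_mulVec_eq_smul (hb i), mulVec_smul, dotProduct_smul,
    smul_eq_mul, RCLike.re_ofReal_mul]

theorem IsHermitian.re_dotProduct_cfc_mulVec_eq_sum (hA : A.IsHermitian) (f : ℝ → ℝ)
    (v : n → 𝕜) :
    RCLike.re (star v ⬝ᵥ (cfc f A *ᵥ v)) =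
      ∑ k, ‖(star (hA.eigenvectorUnitary : Matrix n n 𝕜) *ᵥ v) k‖ ^ 2 * f (hA.eigenvalues k) := by
  rw [hA.cfc_eq, IsHermitian.cfc, Unitary.conjStarAlgAut_apply, ← mulVec_mulVec, ← mulVec_mulVec,
    dotProduct_mulVec, ← star_star (vecMul _ _), star_vecMul, star_star, ← star_eq_conjTranspose,
    dotProduct, map_sum]
  refine Finset.sum_congr rfl fun k _ => ?_
  rw [mulVec_diagonal, Pi.star_apply, Function.comp_apply, Function.comp_apply, RCLike.star_def,
    mul_left_comm, RCLike.conj_mul, ← RCLike.ofReal_pow, ← RCLike.ofReal_mul, RCLike.ofReal_re,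
    mul_comm]

end Matrix

theorem ConvexOn.map_re_dotProduct_mulVec_le {n 𝕜 : Type*} [RCLike 𝕜] [Fintype n] [DecidableEq n]
    {A : Matrix n n 𝕜} {s : Set ℝ} {f : ℝ → ℝ} (hf : ConvexOn ℝ s f) (hA : A.IsHermitian)
    (hs : spectrum ℝ A ⊆ s) {v : n → 𝕜} (hv : star v ⬝ᵥ v = 1) :
    f (RCLike.re (star v ⬝ᵥ (A *ᵥ v))) ≤ RCLike.re (star v ⬝ᵥ (cfc f A *ᵥ v)) := by
  have hw : ∑ k, ‖(star (hA.eigenvectorUnitary : Matrix n n 𝕜) *ᵥ v) k‖ ^ 2 = 1 := by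
    have h := hA.re_dotProduct_cfc_mulVec_eq_sum (fun _ => 1) v
    rw [cfc_const_one ℝ A, one_mulVec, hv, RCLike.one_re] at h
    simpa using h.symm
  conv_lhs => rw [← cfc_id' ℝ A, hA.re_dotProduct_cfc_mulVec_eq_sum]
  rw [hA.re_dotProduct_cfc_mulVec_eq_sum]
  simpa only [smul_eq_mul] using hf.map_sum_le (fun k _ => sq_nonneg _) hw
    fun k _ => hs (hA.eigenvalues_mem_spectrum_real k)

section Pinching

variable {n : Type*} [Fintype n] [DecidableEq n] {ρ σ : Matrix n n ℂ}

theorem specProj_mulVec_of_mulVec_eq_smul (hσ : σ.IsHermitian) {v : n → ℂ} {μ : ℝ}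
    (hv : σ *ᵥ v = (μ : ℂ) • v) (ν : ℝ) : specProj σ ν *ᵥ v = if μ = ν then v else 0 := by
  rw [specProj, matFun, hσ.cfc_mulVec_of_mulVec_eq_smul hv]
  split_ifs <;> simp

theorem mul_specProj (hσ : σ.IsHermitian) (μ : ℝ) : σ * specProj σ μ = μ • specProj σ μ := by
  have hσ' : IsSelfAdjoint σ := hσ
  have h : (fun x : ℝ => x * if x = μ then 1 else 0) = fun x => μ * if x = μ then 1 else 0 := by
    funext x; split_ifs with hx <;> simp [hx]
  rw [specProj, matFun, ← cfc_const_mul μ _ σ (σ.finite_real_spectrum.continuousOn _), ← h,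
    cfc_mul (fun x : ℝ => x) _ σ (hg := σ.finite_real_spectrum.continuousOn _), cfc_id' ℝ σ]

theorem specProj_mul (hσ : σ.IsHermitian) (μ : ℝ) : specProj σ μ * σ = μ • specProj σ μ := by
  have hσ' : IsSelfAdjoint σ := hσ
  have h : (fun x : ℝ => (if x = μ then 1 else 0) * x) = fun x => μ * if x = μ then 1 else 0 := by
    funext x; split_ifs with hx <;> simp [hx]
  rw [specProj, matFun, ← cfc_const_mul μ _ σ (σ.finite_real_spectrum.continuousOn _), ← h,
    cfc_mul _ (fun x : ℝ => x) σ (σ.finite_real_spectrum.continuousOn _), cfc_id' ℝ σ]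

theorem commute_pinch (hσ : σ.IsHermitian) (ρ : Matrix n n ℂ) : Commute σ (pinch σ ρ) :=
  Commute.sum_right _ _ _ fun μ _ => by
    rw [Commute, SemiconjBy, ← Matrix.mul_assoc, ← Matrix.mul_assoc, mul_specProj hσ,
      Matrix.mul_assoc _ _ σ, specProj_mul hσ, smul_mul_assoc, smul_mul_assoc, mul_smul_comm]

theorem isHermitian_pinch (hρ : ρ.IsHermitian) (σ : Matrix n n ℂ) : (pinch σ ρ).IsHermitian :=
  isSelfAdjoint_sum _ fun μ _ => by
    have hP : IsSelfAdjoint (specProj σ μ) := cfc_predicate _ σ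
    simpa [hP.star_eq] using hρ.isSelfAdjoint.conjugate (specProj σ μ)

theorem dotProduct_pinch_mulVec_of_mulVec_eq_smul (hσ : σ.IsHermitian) (ρ : Matrix n n ℂ)
    {v : n → ℂ} (hv0 : v ≠ 0) {μ : ℝ} (hv : σ *ᵥ v = (μ : ℂ) • v) :
    star v ⬝ᵥ (pinch σ ρ *ᵥ v) = star v ⬝ᵥ (ρ *ᵥ v) := by
  have hμ : μ ∈ distinctEigs σ := by
    obtain ⟨i, hi⟩ :=
      hσ.spectrum_real_eq_range_eigenvalues ▸ hσ.mem_spectrum_of_mulVec_eq_smul hv0 hv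
    rw [distinctEigs, dif_pos hσ, ← hi]
    exact Finset.mem_image_of_mem _ (Finset.mem_univ i)
  have hterm (ν : ℝ) : star v ⬝ᵥ ((specProj σ ν * ρ * specProj σ ν) *ᵥ v) =
      if μ = ν then star v ⬝ᵥ (ρ *ᵥ v) else 0 := by
    have hP : (specProj σ ν)ᴴ = specProj σ ν := (cfc_predicate _ σ : IsSelfAdjoint _)
    rw [← mulVec_mulVec, ← mulVec_mulVec, dotProduct_mulVec, ← hP, ← star_mulVec, hP,
      specProj_mulVec_of_mulVec_eq_smul hσ hv]
    split_ifs <;> simp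
  rw [pinch, sum_mulVec, dotProduct_sum, Finset.sum_congr rfl fun ν _ => hterm ν,
    Finset.sum_ite_eq, if_pos hμ]

theorem exists_orthonormalBasis_pinch_mulVec_eq_smul (hρ : ρ.IsHermitian) (hσ : σ.IsHermitian) :
    ∃ (b : OrthonormalBasis n ℂ (EuclideanSpace ℂ n)) (t : n → ℝ), ∀ i,
      σ *ᵥ b i = (t i : ℂ) • ⇑(b i) ∧
      pinch σ ρ *ᵥ b i = (RCLike.re (star ⇑(b i) ⬝ᵥ (ρ *ᵥ b i)) : ℂ) • ⇑(b i) := by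
  obtain ⟨b, a, t, hb⟩ := (isHermitian_pinch hρ σ).exists_orthonormalBasis_mulVec_eq_smul_of_commute
    hσ (commute_pinch hσ ρ).symm
  refine ⟨b, t, fun i => ⟨(hb i).2, ?_⟩⟩
  have hb0 : (b i : n → ℂ) ≠ 0 := fun h => by simpa [h] using b.star_dotProduct_self i
  rw [← dotProduct_pinch_mulVec_of_mulVec_eq_smul hσ ρ hb0 (hb i).2, (hb i).1, dotProduct_smul,
    b.star_dotProduct_self, smul_eq_mul, mul_one]
  simp

theorem re_trace_cfc_pinch_mul_cfc_eq_sum (hρ : ρ.IsHermitian) (hσ : σ.IsHermitian)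
    {b : OrthonormalBasis n ℂ (EuclideanSpace ℂ n)} {t : n → ℝ}
    (hb : ∀ i, σ *ᵥ b i = (t i : ℂ) • ⇑(b i) ∧
      pinch σ ρ *ᵥ b i = (RCLike.re (star ⇑(b i) ⬝ᵥ (ρ *ᵥ b i)) : ℂ) • ⇑(b i))
    (f g : ℝ → ℝ) :
    RCLike.re (cfc f (pinch σ ρ) * cfc g σ).trace =
      ∑ i, g (t i) * f (RCLike.re (star ⇑(b i) ⬝ᵥ (ρ *ᵥ b i))) := by
  rw [hσ.re_trace_mul_cfc_eq_sum _ b fun i => (hb i).1]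
  refine Finset.sum_congr rfl fun i _ => ?_
  rw [(isHermitian_pinch hρ σ).cfc_mulVec_of_mulVec_eq_smul (hb i).2, dotProduct_smul,
    b.star_dotProduct_self, smul_eq_mul, mul_one, RCLike.ofReal_re, RCLike.re_to_complex]

end Pinching

/-- Pinching decreases the Petz Rényi entropy. -/
theorem petzRenyi_pinching_le {d : ℕ} (hd : 1 ≤ d)
    (ρ σ : Matrix (Fin d) (Fin d) ℂ)
    (hρ : IsFaithfulState ρ) (hσ : IsFaithfulState σ) (s : ℝ) (hs : 0 < s) :
    petzRenyi s (pinch σ ρ) σ ≤ petzRenyi s ρ σ := by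
  obtain ⟨hρ, -⟩ := hρ
  obtain ⟨hσ, -⟩ := hσ
  have : Nonempty (Fin d) := ⟨⟨0, hd⟩⟩
  obtain ⟨b, t, hb⟩ := exists_orthonormalBasis_pinch_mulVec_eq_smul hρ.1 hσ.1
  have hb0 (i) : (b i : Fin d → ℂ) ≠ 0 := fun h => by simpa [h] using b.star_dotProduct_self i
  have ht (i) : 0 < t i := by
    simpa [(hb i).1, dotProduct_smul, b.star_dotProduct_self] using hσ.re_dotProduct_pos (hb0 i)
  have hspec : spectrum ℝ ρ ⊆ Set.Ici 0 := fun x hx => by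
    obtain ⟨i, rfl⟩ := hρ.1.spectrum_real_eq_range_eigenvalues ▸ hx
    exact (hρ.eigenvalues_pos i).le
  have hconv : ConvexOn ℝ (Set.Ici 0) fun x : ℝ => x ^ (1 + s) := convexOn_rpow (by linarith)
  simp only [petzRenyi, matRpow, matFun, ← RCLike.re_to_complex]
  rw [re_trace_cfc_pinch_mul_cfc_eq_sum hρ.1 hσ.1 hb,
    hσ.1.re_trace_mul_cfc_eq_sum _ b fun i => (hb i).1]
  refine mul_le_mul_of_nonneg_left (Real.log_le_log ?_ (Finset.sum_le_sum fun i _ => ?_))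
    (inv_nonneg.2 hs.le)
  · refine Finset.sum_pos (fun i _ => mul_pos ?_ ?_) Finset.univ_nonempty
    · exact Real.rpow_pos_of_pos (ht i) _
    · exact Real.rpow_pos_of_pos (hρ.re_dotProduct_pos (hb0 i)) _
  · exact mul_le_mul_of_nonneg_left
      (hconv.map_re_dotProduct_mulVec_le hρ.1 hspec (b.star_dotProduct_self i))
      (Real.rpow_nonneg (ht i).le _)
end
end

section
/- Relative entropy to a pinched state is an entropy gain bounded by the logarithm of the number of projections: Let c_1, …, c_m be nonzero orthogonal projections in M_d(ℂ) (each c_i Hermitian with c_i² = c_i, c_i c_j = 0 for i ≠ j) with c_1 + ⋯ + c_m = I, let κ_C(X) := Σ_{i=1}^m c_i X c_i, and let ρ be a faithful state. Then D(ρ||κ_C(ρ)) = H(κ_C(ρ)) − H(ρ) ≤ log m. -/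
open Matrix Filter
open scoped Kronecker ComplexOrder

noncomputable section

/-!
Each `c i` commutes with `κ(ρ) = ∑ i, c i * ρ * c i`, hence with `log κ(ρ)`, and `κ` is
self-dual for the trace, so `Tr (ρ log κ(ρ)) = Tr (κ(ρ) log κ(ρ))`: this is the entropy identity.
For the bound, `∑ i j, (c i - c j) ρ (c i - c j) = 2 (m κ(ρ) - ρ)` gives the pinching inequality
`ρ ≤ m κ(ρ)`. Operator monotonicity of `log` turns it into `log ρ - log κ(ρ) ≤ log m`, and pairing
with the state `ρ` gives `D(ρ‖κ(ρ)) ≤ log m`.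
-/

section

open scoped MatrixOrder Matrix.Norms.L2Operator

namespace Matrix

variable {𝕜 n ι : Type*} [RCLike 𝕜] [Fintype n] [Fintype ι]

def pinching (c : ι → Matrix n n 𝕜) (X : Matrix n n 𝕜) : Matrix n n 𝕜 :=
  ∑ i, c i * X * c i

lemma commute_pinching {c : ι → Matrix n n 𝕜} (hidem : ∀ i, c i * c i = c i)
    (horth : Pairwise fun i j => c i * c j = 0) (X : Matrix n n 𝕜) (i : ι) :
    Commute (c i) (pinching c X) := by
  have hleft : c i * pinching c X = c i * X * c i := by
    rw [pinching, Finset.mul_sum, Finset.sum_eq_single i]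
    · rw [← Matrix.mul_assoc, ← Matrix.mul_assoc, hidem]
    · intro j _ hji
      rw [← Matrix.mul_assoc, ← Matrix.mul_assoc, horth hji.symm, Matrix.zero_mul,
        Matrix.zero_mul]
    · simp
  have hright : pinching c X * c i = c i * X * c i := by
    rw [pinching, Finset.sum_mul, Finset.sum_eq_single i]
    · rw [Matrix.mul_assoc, hidem]
    · intro j _ hji
      rw [Matrix.mul_assoc, horth hji, Matrix.mul_zero]
    · simp
  exact hleft.trans hright.symm

variable [DecidableEq n]

lemma trace_pinching_mul_of_commute {c : ι → Matrix n n 𝕜} (hidem : ∀ i, c i * c i = c i)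
    (hsum : ∑ i, c i = 1) (X : Matrix n n 𝕜) {Y : Matrix n n 𝕜} (hY : ∀ i, Commute (c i) Y) :
    (pinching c X * Y).trace = (X * Y).trace := by
  have hterm : ∀ i, (c i * X * c i * Y).trace = (c i * X * Y).trace := fun i => by
    rw [Matrix.mul_assoc _ (c i), (hY i).eq, ← Matrix.mul_assoc, trace_mul_comm,
      ← Matrix.mul_assoc, ← Matrix.mul_assoc, hidem]
  simp only [pinching, Finset.sum_mul, trace_sum, hterm]
  rw [← trace_sum, ← Finset.sum_mul, ← Finset.sum_mul, hsum, Matrix.one_mul]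

lemma sum_sum_sub_mul_sub {c : ι → Matrix n n 𝕜} (hsum : ∑ i, c i = 1) (X : Matrix n n 𝕜) :
    ∑ i, ∑ j, (c i - c j) * X * (c i - c j) = 2 • (Fintype.card ι • pinching c X - X) := by
  have hcross : ∑ i, ∑ j, c i * X * c j = X := by
    rw [← Finset.sum_mul_sum, ← Finset.sum_mul, hsum, Matrix.one_mul, Matrix.mul_one]
  have hcross' : ∑ i, ∑ j, c j * X * c i = X := by rw [Finset.sum_comm, hcross]
  have hdiag : ∑ _i : ι, ∑ j, c j * X * c j = Fintype.card ι • pinching c X := by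
    rw [Finset.sum_const, Finset.card_univ, pinching]
  have hdiag' : ∑ i, ∑ _j : ι, c i * X * c i = Fintype.card ι • pinching c X := by
    rw [Finset.sum_comm, hdiag]
  simp only [Matrix.sub_mul, Matrix.mul_sub, Finset.sum_sub_distrib]
  rw [hdiag, hdiag', hcross, hcross']
  abel

lemma le_card_smul_pinching {c : ι → Matrix n n 𝕜} (hherm : ∀ i, (c i).IsHermitian)
    (hsum : ∑ i, c i = 1) {X : Matrix n n 𝕜} (hX : X.PosSemidef) :
    X ≤ (Fintype.card ι : ℝ) • pinching c X := by
  have hconj : ∀ i j, 0 ≤ (c i - c j) * X * (c i - c j) := fun i j => by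
    have h := (hX.conjTranspose_mul_mul_same (c i - c j)).nonneg
    rwa [((hherm i).sub (hherm j)).eq] at h
  have hsum_nonneg : 0 ≤ ∑ i, ∑ j, (c i - c j) * X * (c i - c j) :=
    Finset.sum_nonneg fun i _ => Finset.sum_nonneg fun j _ => hconj i j
  rw [sum_sum_sub_mul_sub hsum, ← Nat.cast_smul_eq_nsmul ℝ] at hsum_nonneg
  rw [← sub_nonneg, Nat.cast_smul_eq_nsmul]
  simpa using smul_nonneg (by norm_num : (0 : ℝ) ≤ 2⁻¹) hsum_nonneg

lemma PosSemidef.trace_mul_nonneg {A B : Matrix n n 𝕜} (hA : A.PosSemidef) (hB : B.PosSemidef) :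
    0 ≤ (A * B).trace := by
  obtain ⟨C, rfl⟩ := CStarAlgebra.nonneg_iff_eq_star_mul_self.mp hB.nonneg
  rw [← Matrix.mul_assoc, trace_mul_comm, ← Matrix.mul_assoc, star_eq_conjTranspose]
  exact (hA.mul_mul_conjTranspose_same C).trace_nonneg

lemma PosSemidef.trace_mul_le_trace_mul {A B C : Matrix n n 𝕜} (hA : A.PosSemidef)
    (hBC : B ≤ C) : (A * B).trace ≤ (A * C).trace := by
  rw [← sub_nonneg, ← trace_sub, ← Matrix.mul_sub]
  exact hA.trace_mul_nonneg (le_iff.mp hBC)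

end Matrix

variable {n ι : Type*} [Fintype n] [DecidableEq n] [Fintype ι]

lemma relEnt_pinching_eq_vNEnt_sub {c : ι → Matrix n n ℂ} (hidem : ∀ i, c i * c i = c i)
    (horth : Pairwise fun i j => c i * c j = 0) (hsum : ∑ i, c i = 1) (ρ : Matrix n n ℂ) :
    relEnt ρ (Matrix.pinching c ρ) = vNEnt (Matrix.pinching c ρ) - vNEnt ρ := by
  have hcomm : ∀ i, Commute (c i) (matLog (Matrix.pinching c ρ)) := fun i =>
    ((Matrix.commute_pinching hidem horth ρ i).symm.cfc_real Real.log).symm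
  have htrace := Matrix.trace_pinching_mul_of_commute hidem hsum ρ hcomm
  simp only [relEnt, vNEnt, Matrix.mul_sub, Matrix.trace_sub, Complex.sub_re, htrace]
  ring

lemma relEnt_le_log_of_le_smul {ρ σ : Matrix n n ℂ} (hρ : IsFaithfulState ρ) {r : ℝ}
    (hr : 0 < r) (h : ρ ≤ r • σ) : relEnt ρ σ ≤ Real.log r := by
  obtain ⟨hρpd, hρtr⟩ := hρ
  have hσ : IsStrictlyPositive σ := by
    simpa [inv_smul_smul₀ hr.ne'] using
      (hρpd.isStrictlyPositive.of_le h).smul (inv_pos.mpr hr)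
  have hlog : matLog ρ - matLog σ ≤ algebraMap ℝ _ (Real.log r) := by
    rw [sub_le_iff_le_add]
    change CFC.log ρ ≤ algebraMap ℝ _ (Real.log r) + CFC.log σ
    rw [← CFC.log_smul' σ hr]
    exact CFC.log_le_log h
  have htrace := hρpd.posSemidef.trace_mul_le_trace_mul hlog
  rw [Algebra.algebraMap_eq_smul_one, Matrix.mul_smul, Matrix.mul_one, Matrix.trace_smul,
    hρtr] at htrace
  simpa [relEnt, Matrix.mul_sub] using (Complex.le_def.mp htrace).1

end

theorem relEnt_pinch_entropy_gain_general {d m : ℕ} (hd : 1 ≤ d)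
    (c : Fin m → Matrix (Fin d) (Fin d) ℂ)
    (hherm : ∀ i, (c i).IsHermitian)
    (hidem : ∀ i, c i * c i = c i)
    (horth : ∀ i j, i ≠ j → c i * c j = 0)
    (hsum : ∑ i, c i = 1)
    (ρ : Matrix (Fin d) (Fin d) ℂ) (hρ : IsFaithfulState ρ) :
    relEnt ρ (∑ i, c i * ρ * c i) = vNEnt (∑ i, c i * ρ * c i) - vNEnt ρ ∧
    vNEnt (∑ i, c i * ρ * c i) - vNEnt ρ ≤ Real.log (m : ℝ) := by
  have hent := relEnt_pinching_eq_vNEnt_sub hidem (fun i j => horth i j) hsum ρ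
  have hm : 0 < (m : ℝ) := by
    have : Nonempty (Fin d) := ⟨⟨0, hd⟩⟩
    rcases Nat.eq_zero_or_pos m with rfl | hm
    · simp at hsum
    · exact_mod_cast hm
  refine ⟨hent, hent ▸ relEnt_le_log_of_le_smul hρ hm ?_⟩
  simpa using Matrix.le_card_smul_pinching hherm hsum hρ.1.posSemidef

/-- Relative entropy to a pinched state is an entropy gain bounded
by the logarithm of the number of projections. -/
theorem relEnt_pinch_entropy_gain {d m : ℕ} (hd : 1 ≤ d)
    (c : Fin m → Matrix (Fin d) (Fin d) ℂ)
    (hherm : ∀ i, (c i).IsHermitian) (hnz : ∀ i, c i ≠ 0)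
    (hidem : ∀ i, c i * c i = c i)
    (horth : ∀ i j, i ≠ j → c i * c j = 0)
    (hsum : ∑ i, c i = 1)
    (ρ : Matrix (Fin d) (Fin d) ℂ) (hρ : IsFaithfulState ρ) :
    relEnt ρ (∑ i, c i * ρ * c i) = vNEnt (∑ i, c i * ρ * c i) - vNEnt ρ ∧
    vNEnt (∑ i, c i * ρ * c i) - vNEnt ρ ≤ Real.log (m : ℝ) :=
  relEnt_pinch_entropy_gain_general hd c hherm hidem horth hsum ρ hρ
end
end

section
/- The Petz relative Rényi entropy dominates the sandwiched relative Rényi entropy: For faithful states ρ, σ in M_d(ℂ) and every s > 0, D_{1+s}(ρ||σ) ≥ D̃_{1+s}(ρ||σ). -/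
open Matrix Filter
open scoped Kronecker ComplexOrder

noncomputable section

/-! Araki–Lieb–Thirring by complex interpolation. With `r = 1 + s`, `A = ρ` and
`B = σ ^ (-s / (1 + s))`, the sandwiched trace is `Tr H ^ r` for `H = B ^ (1/2) A B ^ (1/2)`,
and the Petz trace is `Tr (A ^ r B ^ r)`. The entire function
`g z = Tr (B ^ (r z / 2) A ^ (r z) B ^ (r z / 2) H ^ (r (1 - z)))`
is bounded on the strip `0 ≤ re z ≤ 1`. On `re z = 0` it is the trace of a unitary times `H ^ r`,
so `‖g z‖ ≤ Tr H ^ r`; on `re z = 1` Cauchy–Schwarz for the trace gives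
`‖g z‖ ≤ Tr (A ^ r B ^ r)`; and `g (1/r) = Tr H ^ r`. The three lines theorem at `z = 1/r` yields
`Tr H ^ r ≤ (Tr H ^ r) ^ (1 - 1/r) (Tr (A ^ r B ^ r)) ^ (1/r)`.
-/

open Complex ComplexConjugate Unitary Asymptotics Complex.HadamardThreeLines

theorem Real.le_of_le_rpow_one_sub_mul_rpow {T C θ : ℝ} (hT : 0 ≤ T) (hC : 0 ≤ C) (hθ : 0 < θ)
    (h : T ≤ T ^ (1 - θ) * C ^ θ) : T ≤ C := by
  rcases hT.eq_or_lt with rfl | hT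
  · exact hC
  have hsplit : T ^ (1 - θ) * T ^ θ = T := by
    rw [← Real.rpow_add hT, sub_add_cancel, Real.rpow_one]
  rw [← Real.rpow_le_rpow_iff hT.le hC hθ]
  exact le_of_mul_le_mul_left (hsplit.trans_le h) (Real.rpow_pos_of_pos hT _)

def Complex.entireBoundedOn (s : Set ℂ) : Subalgebra ℂ (ℂ → ℂ) where
  carrier := {f | Differentiable ℂ f ∧ f =O[𝓟 s] (1 : ℂ → ℂ)}
  mul_mem' hf hg := ⟨hf.1.mul hg.1, (hf.2.mul hg.2).congr_right fun _ => mul_one 1⟩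
  add_mem' hf hg := ⟨hf.1.add hg.1, hf.2.add hg.2⟩
  algebraMap_mem' c := ⟨differentiable_const c, isBigO_const_one ℂ c _⟩

namespace Complex

theorem const_mem_entireBoundedOn (s : Set ℂ) (c : ℂ) : (fun _ => c) ∈ entireBoundedOn s :=
  (entireBoundedOn s).algebraMap_mem c

theorem bddAbove_norm_image_of_mem_entireBoundedOn {s : Set ℂ} {f : ℂ → ℂ}
    (hf : f ∈ entireBoundedOn s) : BddAbove ((norm ∘ f) '' s) := by
  obtain ⟨c, hc⟩ := isBigO_principal.1 hf.2
  exact ⟨c, by rintro _ ⟨z, hz, rfl⟩; simpa using hc z hz⟩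

theorem exp_affine_mem_entireBoundedOn_verticalClosedStrip (l u a : ℝ) (b : ℂ) :
    (fun z => cexp (a * z + b)) ∈ entireBoundedOn (verticalClosedStrip l u) := by
  refine ⟨by fun_prop,
    isBigO_principal.2 ⟨Real.exp (|a| * (|l| + |u|) + b.re), fun z hz => ?_⟩⟩
  obtain ⟨hl, hu⟩ : l ≤ z.re ∧ z.re ≤ u := hz
  have hre : |z.re| ≤ |l| + |u| := abs_le.2
    ⟨by linarith [neg_abs_le l, abs_nonneg u], by linarith [le_abs_self u, abs_nonneg l]⟩
  have : a * z.re ≤ |a| * (|l| + |u|) :=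
    (le_abs_self _).trans (abs_mul a z.re ▸ mul_le_mul_of_nonneg_left hre (abs_nonneg a))
  simpa [norm_exp] using this

end Complex

namespace Subalgebra

variable {R X : Type*} [CommSemiring R] (S : Subalgebra R (X → R)) {l m n : Type*} [Fintype m]

theorem matrix_mul_apply_mem {F : X → Matrix l m R} {G : X → Matrix m n R}
    (hF : ∀ i j, (fun x => F x i j) ∈ S) (hG : ∀ i j, (fun x => G x i j) ∈ S)
    (i : l) (j : n) : (fun x => (F x * G x) i j) ∈ S := by
  convert S.sum_mem fun k (_ : k ∈ Finset.univ) => S.mul_mem (hF i k) (hG k j) using 1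
  ext x
  simp only [Matrix.mul_apply, Finset.sum_apply, Pi.mul_apply]

theorem matrix_trace_mem [Fintype n] {F : X → Matrix n n R}
    (hF : ∀ i j, (fun x => F x i j) ∈ S) : (fun x => (F x).trace) ∈ S := by
  convert S.sum_mem fun i (_ : i ∈ Finset.univ) => hF i i using 1
  ext x
  simp only [Matrix.trace, Matrix.diag, Finset.sum_apply]

end Subalgebra

namespace Matrix

variable {n : Type*} [Fintype n] [DecidableEq n]

theorem norm_trace_mul_sq_le (P Q : Matrix n n ℂ) :
    ‖(P * Q).trace‖ ^ 2 ≤ (P * Pᴴ).trace.re * (Q * Qᴴ).trace.re := by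
  let := (1 : Matrix n n ℂ).toMatrixSeminormedAddCommGroup PosSemidef.one
  let := (1 : Matrix n n ℂ).toMatrixInnerProductSpace PosSemidef.one
  have h := inner_mul_inner_self_le (𝕜 := ℂ) Pᴴ Q
  change ‖(Q * 1 * Pᴴᴴ).trace‖ * ‖(Pᴴ * 1 * Qᴴ).trace‖ ≤
    (Pᴴ * 1 * Pᴴᴴ).trace.re * (Q * 1 * Qᴴ).trace.re at h
  simp only [mul_one, conjTranspose_conjTranspose] at h
  rwa [← conjTranspose_mul, trace_conjTranspose, norm_star, trace_mul_comm Q, trace_mul_comm Pᴴ,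
    ← sq] at h

open scoped MatrixOrder in
theorem PosSemidef.norm_trace_unitary_mul_le {U X : Matrix n n ℂ}
    (hU : U ∈ unitary (Matrix n n ℂ)) (hX : X.PosSemidef) : ‖(U * X).trace‖ ≤ X.trace.re := by
  obtain ⟨S, rfl⟩ := CStarAlgebra.nonneg_iff_eq_star_mul_self.mp hX.nonneg
  rw [star_eq_conjTranspose] at hX ⊢
  have hPP : ((U * Sᴴ) * (U * Sᴴ)ᴴ).trace = (Sᴴ * S).trace := by
    rw [conjTranspose_mul, conjTranspose_conjTranspose, ← mul_assoc, trace_mul_cycle,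
      ← mul_assoc, ← star_eq_conjTranspose, Unitary.star_mul_self_of_mem hU, one_mul]
  have h := norm_trace_mul_sq_le (U * Sᴴ) S
  rw [hPP, trace_mul_comm S, mul_assoc, ← sq] at h
  exact (abs_le_of_sq_le_sq' h (Complex.nonneg_iff.mp hX.trace_nonneg).1).2

namespace IsHermitian

variable {A : Matrix n n ℂ} (hA : A.IsHermitian)

/-- Since `Real.log 0 = 0`, a zero eigenvalue is sent to `1`, so this is `A ^ z` only for
positive definite `A`. -/
def cpow (z : ℂ) : Matrix n n ℂ :=
  conjStarAlgAut ℂ _ hA.eigenvectorUnitary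
    (diagonal fun i => cexp (z * Real.log (hA.eigenvalues i)))

theorem cpow_add (z w : ℂ) : hA.cpow (z + w) = hA.cpow z * hA.cpow w := by
  simp only [cpow, ← map_mul, diagonal_mul_diagonal, add_mul, Complex.exp_add]

theorem cpow_zero : hA.cpow 0 = 1 := by
  simp [cpow]

theorem conjTranspose_cpow (z : ℂ) : (hA.cpow z)ᴴ = hA.cpow (conj z) := by
  rw [← star_eq_conjTranspose, cpow, ← map_star, star_eq_conjTranspose, diagonal_conjTranspose]
  congr 2
  ext i
  simp [← Complex.exp_conj]

theorem cpow_mul_conjTranspose_cpow (z : ℂ) :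
    hA.cpow z * (hA.cpow z)ᴴ = hA.cpow (2 * z.re : ℝ) := by
  rw [conjTranspose_cpow, ← cpow_add, add_conj]

theorem conjTranspose_cpow_mul_cpow (z : ℂ) :
    (hA.cpow z)ᴴ * hA.cpow z = hA.cpow (2 * z.re : ℝ) := by
  rw [conjTranspose_cpow, ← cpow_add, add_comm, add_conj]

theorem cpow_mem_unitary {z : ℂ} (hz : z.re = 0) : hA.cpow z ∈ unitary (Matrix n n ℂ) := by
  rw [Unitary.mem_iff, star_eq_conjTranspose, conjTranspose_cpow_mul_cpow,
    cpow_mul_conjTranspose_cpow, hz, mul_zero, ofReal_zero, cpow_zero]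
  exact ⟨rfl, rfl⟩

theorem cpow_apply (z : ℂ) (i j : n) :
    hA.cpow z i j = ∑ k, (hA.eigenvectorUnitary : Matrix n n ℂ) i k *
      cexp (z * Real.log (hA.eigenvalues k)) *
        star ((hA.eigenvectorUnitary : Matrix n n ℂ) j k) := by
  rw [cpow, conjStarAlgAut_apply, mul_apply]
  simp only [mul_diagonal, star_apply]

theorem cpow_affine_apply_mem_entireBoundedOn (l u a : ℝ) (b : ℂ) (i j : n) :
    (fun z => hA.cpow (a * z + b) i j) ∈ entireBoundedOn (verticalClosedStrip l u) := by
  let S := entireBoundedOn (verticalClosedStrip l u)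
  have hexp (k : n) := exp_affine_mem_entireBoundedOn_verticalClosedStrip l u
    (a * Real.log (hA.eigenvalues k)) (b * Real.log (hA.eigenvalues k))
  let U : Matrix n n ℂ := hA.eigenvectorUnitary
  convert S.sum_mem fun k (_ : k ∈ Finset.univ) => S.mul_mem
    (S.mul_mem (const_mem_entireBoundedOn _ (U i k)) (hexp k))
    (const_mem_entireBoundedOn _ (star (U j k))) using 1
  ext z
  simp only [cpow_apply, Finset.sum_apply, Pi.mul_apply]
  congr! 4
  push_cast
  ring

end IsHermitian

theorem PosDef.cpow_ofReal {A : Matrix n n ℂ} (hA : A.PosDef) (t : ℝ) :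
    hA.1.cpow t = matRpow A t := by
  rw [matRpow, matFun, hA.1.cfc_eq, IsHermitian.cfc, IsHermitian.cpow]
  congr 2
  ext i
  simp [← ofReal_mul, ← ofReal_exp, Real.rpow_def_of_pos (hA.eigenvalues_pos i), mul_comm]

theorem PosDef.mul_mul_same {A B : Matrix n n ℂ} (hA : A.PosDef) (hB : B.PosDef) :
    (B * A * B).PosDef := by
  simpa only [hB.1.eq] using hA.conjTranspose_mul_mul_same (mulVec_injective_of_isUnit hB.isUnit)

end Matrix

section matRpow

variable {n : Type*} [Fintype n] [DecidableEq n] {A : Matrix n n ℂ}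

theorem posDef_matRpow (hA : A.PosDef) (t : ℝ) : (matRpow A t).PosDef := by
  rw [matRpow, matFun, hA.1.cfc_eq, IsHermitian.cfc, conjStarAlgAut_apply,
    isUnit_coe.posDef_star_right_conjugate_iff, posDef_diagonal_iff]
  intro i
  simpa using Real.rpow_pos_of_pos (hA.eigenvalues_pos i) t

theorem matRpow_matRpow (hA : A.PosDef) (u v : ℝ) :
    matRpow (matRpow A u) v = matRpow A (u * v) := by
  have hspec : ∀ x ∈ spectrum ℝ A, 0 < x := by
    rw [hA.1.spectrum_real_eq_range_eigenvalues]
    rintro _ ⟨i, rfl⟩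
    exact hA.eigenvalues_pos i
  have hcont {s : Set ℝ} (hs : ∀ x ∈ s, 0 < x) (t : ℝ) :
      ContinuousOn (fun x : ℝ => x ^ t) s := fun x hx =>
    (Real.continuousAt_rpow_const x t (Or.inl (hs x hx).ne')).continuousWithinAt
  have hspec' : ∀ x ∈ (fun x : ℝ => x ^ u) '' spectrum ℝ A, 0 < x := by
    rintro _ ⟨x, hx, rfl⟩
    exact Real.rpow_pos_of_pos (hspec x hx) u
  rw [matRpow, matRpow, matRpow, matFun, matFun, matFun,
    ← cfc_comp _ _ A hA.1.isSelfAdjoint (hcont hspec' v) (hcont hspec u)]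
  exact cfc_congr fun x hx => (Real.rpow_mul (hspec x hx).le u v).symm

theorem matRpow_one (hA : A.PosDef) : matRpow A 1 = A := by
  rw [matRpow, matFun, cfc_congr (g := id) fun x _ => Real.rpow_one x,
    cfc_id ℝ A hA.1.isSelfAdjoint]

theorem Matrix.PosDef.cpow_one (hA : A.PosDef) : hA.1.cpow 1 = A := by
  rw [← ofReal_one, hA.cpow_ofReal, matRpow_one hA]

end matRpow

namespace Matrix

variable {n : Type*} [Fintype n] [DecidableEq n]

section Interpolation

variable {A B H : Matrix n n ℂ} (hA : A.PosDef) (hB : B.PosDef) (hH : H.PosDef) (r : ℝ)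

def arakiInterp (z : ℂ) : ℂ :=
  (hB.1.cpow (r / 2 * z) * hA.1.cpow (r * z) * hB.1.cpow (r / 2 * z) *
    hH.1.cpow (r * (1 - z))).trace

theorem arakiInterp_mem_entireBoundedOn :
    arakiInterp hA hB hH r ∈ entireBoundedOn (verticalClosedStrip 0 1) := by
  let S := entireBoundedOn (verticalClosedStrip 0 1)
  have hB' (i j : n) : (fun z => hB.1.cpow (r / 2 * z) i j) ∈ S := by
    simpa using hB.1.cpow_affine_apply_mem_entireBoundedOn 0 1 (r / 2) 0 i j
  have hA' (i j : n) : (fun z => hA.1.cpow (r * z) i j) ∈ S := by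
    simpa using hA.1.cpow_affine_apply_mem_entireBoundedOn 0 1 r 0 i j
  have hH' (i j : n) : (fun z => hH.1.cpow (r * (1 - z)) i j) ∈ S := by
    convert hH.1.cpow_affine_apply_mem_entireBoundedOn 0 1 (-r) r i j using 4
    push_cast
    ring
  exact S.matrix_trace_mem <|
    S.matrix_mul_apply_mem (S.matrix_mul_apply_mem (S.matrix_mul_apply_mem hB' hA') hB') hH'

theorem norm_arakiInterp_le_of_re_eq_zero {z : ℂ} (hz : z.re = 0) :
    ‖arakiInterp hA hB hH r z‖ ≤ (matRpow H r).trace.re := by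
  have hre (c : ℝ) : (c * z).re = 0 := by simp [hz]
  have hU : hB.1.cpow (r / 2 * z) * hA.1.cpow (r * z) * hB.1.cpow (r / 2 * z) *
      hH.1.cpow (-r * z) ∈ unitary (Matrix n n ℂ) := by
    refine mul_mem (mul_mem (mul_mem ?_ ?_) ?_) ?_ <;> apply IsHermitian.cpow_mem_unitary
    all_goals simpa using hre _
  have hsplit : hH.1.cpow (r * (1 - z)) = hH.1.cpow (-r * z) * matRpow H r := by
    rw [← hH.cpow_ofReal, ← IsHermitian.cpow_add]
    ring_nf
  rw [arakiInterp, hsplit, ← mul_assoc]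
  exact (posDef_matRpow hH r).posSemidef.norm_trace_unitary_mul_le hU

theorem norm_arakiInterp_le_of_re_eq_one {z : ℂ} (hz : z.re = 1) :
    ‖arakiInterp hA hB hH r z‖ ≤ (matRpow A r * matRpow B r).trace.re := by
  set w : ℂ := r / 2 * z
  have hw : ((2 * w.re : ℝ) : ℂ) = r := by simp [w, hz]; ring
  have hv : ((2 * (r * (1 - z)).re : ℝ) : ℂ) = 0 := by simp [hz]
  set P := hB.1.cpow w * hA.1.cpow w
  set Q := hA.1.cpow w * hB.1.cpow w * hH.1.cpow (r * (1 - z))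
  have hPQ : arakiInterp hA hB hH r z = (P * Q).trace := by
    rw [arakiInterp, show (r : ℂ) * z = w + w by ring, IsHermitian.cpow_add]
    simp only [P, Q, w, mul_assoc]
  have hPP : (P * Pᴴ).trace.re = (matRpow A r * matRpow B r).trace.re := by
    rw [conjTranspose_mul, mul_assoc, ← mul_assoc (hA.1.cpow w),
      IsHermitian.cpow_mul_conjTranspose_cpow, ← mul_assoc, trace_mul_comm, ← mul_assoc,
      IsHermitian.conjTranspose_cpow_mul_cpow, hw, hA.cpow_ofReal, hB.cpow_ofReal, trace_mul_comm]
  have hQQ : (Q * Qᴴ).trace.re = (matRpow A r * matRpow B r).trace.re := by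
    rw [conjTranspose_mul, conjTranspose_mul, mul_assoc, mul_assoc, ← mul_assoc (hH.1.cpow _),
      IsHermitian.cpow_mul_conjTranspose_cpow, hv, IsHermitian.cpow_zero, one_mul,
      ← mul_assoc (hB.1.cpow w), IsHermitian.cpow_mul_conjTranspose_cpow, hw, hB.cpow_ofReal,
      ← mul_assoc, trace_mul_cycle, IsHermitian.conjTranspose_cpow_mul_cpow, hw, hA.cpow_ofReal]
  have hCS := norm_trace_mul_sq_le P Q
  rw [hPP, hQQ, ← sq] at hCS
  have hC : 0 ≤ (matRpow A r * matRpow B r).trace.re :=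
    hPP ▸ (Complex.nonneg_iff.mp (posSemidef_self_mul_conjTranspose P).trace_nonneg).1
  rw [hPQ]
  exact (abs_le_of_sq_le_sq' hCS hC).2

theorem arakiInterp_ofReal_inv (hr : r ≠ 0)
    (hHAB : H = matRpow B (1 / 2) * A * matRpow B (1 / 2)) :
    arakiInterp hA hB hH r (r⁻¹ : ℝ) = (matRpow H r).trace := by
  have h1 : (r / 2 * (r⁻¹ : ℝ) : ℂ) = (1 / 2 : ℝ) := by push_cast; field_simp
  have h2 : (r * (r⁻¹ : ℝ) : ℂ) = 1 := by push_cast; field_simp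
  have h3 : (r * (1 - (r⁻¹ : ℝ)) : ℂ) = ((r - 1 : ℝ) : ℂ) := by push_cast; field_simp
  rw [arakiInterp, h1, h2, h3, hB.cpow_ofReal, hA.cpow_one, ← hHAB, ← hH.cpow_ofReal r]
  congr 1
  calc H * hH.1.cpow (r - 1 : ℝ) = hH.1.cpow 1 * hH.1.cpow (r - 1 : ℝ) := by rw [hH.cpow_one]
    _ = hH.1.cpow r := by rw [← IsHermitian.cpow_add]; push_cast; ring_nf

end Interpolation

theorem araki_lieb_thirring {A B : Matrix n n ℂ} (hA : A.PosDef) (hB : B.PosDef) {r : ℝ}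
    (hr : 1 ≤ r) :
    (matRpow (matRpow B (1 / 2) * A * matRpow B (1 / 2)) r).trace.re ≤
      (matRpow A r * matRpow B r).trace.re := by
  have hH := hA.mul_mul_same (posDef_matRpow hB (1 / 2))
  have hg := arakiInterp_mem_entireBoundedOn hA hB hH r
  have hθ : ((r⁻¹ : ℝ) : ℂ) ∈ verticalClosedStrip 0 1 := by
    simpa [verticalClosedStrip] using ⟨by positivity, inv_le_one_of_one_le₀ hr⟩
  have hinterp := norm_le_interp_of_mem_verticalClosedStrip' zero_lt_one hθ hg.1.diffContOnCl
    (bddAbove_norm_image_of_mem_entireBoundedOn hg)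
    (fun z hz => norm_arakiInterp_le_of_re_eq_zero hA hB hH r hz)
    (fun z hz => norm_arakiInterp_le_of_re_eq_one hA hB hH r hz)
  rw [arakiInterp_ofReal_inv hA hB hH r (by positivity) rfl] at hinterp
  simp only [ofReal_re, sub_zero, div_one] at hinterp
  have hC := (norm_nonneg _).trans (norm_arakiInterp_le_of_re_eq_one hA hB hH r one_re)
  have hT := (Complex.nonneg_iff.mp (posDef_matRpow hH r).posSemidef.trace_nonneg).1
  exact Real.le_of_le_rpow_one_sub_mul_rpow hT hC (by positivity) ((re_le_norm _).trans hinterp)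

end Matrix

/-- The Petz relative Rényi entropy dominates the sandwiched relative Rényi entropy. -/
theorem sandRenyi_le_petzRenyi {d : ℕ} (hd : 1 ≤ d)
    (ρ σ : Matrix (Fin d) (Fin d) ℂ)
    (hρ : IsFaithfulState ρ) (hσ : IsFaithfulState σ) (s : ℝ) (hs : 0 < s) :
    sandRenyi s ρ σ ≤ petzRenyi s ρ σ := by
  have : Nonempty (Fin d) := ⟨⟨0, hd⟩⟩
  have halt := araki_lieb_thirring hρ.1 (posDef_matRpow hσ.1 (-s / (1 + s))) (r := 1 + s)
    (by linarith)
  rw [matRpow_matRpow hσ.1, matRpow_matRpow hσ.1, div_mul_cancel₀ _ (by positivity),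
    show -s / (1 + s) * (1 / 2) = -s / (2 * (1 + s)) by field_simp] at halt
  have hsand := hρ.1.mul_mul_same (posDef_matRpow hσ.1 (-s / (2 * (1 + s))))
  have hpos := (Complex.pos_iff.mp (posDef_matRpow hsand (1 + s)).trace_pos).1
  exact mul_le_mul_of_nonneg_left (Real.log_le_log hpos halt) (inv_nonneg.2 hs.le)

end
end

section
/- Pinching inequality: Let c_1, …, c_m be orthogonal projections in M_d(ℂ) (each c_i Hermitian with c_i² = c_i and c_i c_j = 0 for i ≠ j) satisfying c_1 + ⋯ + c_m = I, and let ρ ∈ M_d(ℂ) be positive semidefinite Hermitian. Then m · Σ_{i=1}^m c_i ρ c_i − ρ is positive semidefinite. -/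
open Matrix Filter
open scoped Kronecker ComplexOrder

noncomputable section

/-!
Writing `Σ` for `∑ i, Aᵢ` and `m` for the number of terms, the identity
`∑ i, ∑ j, (Aᵢ - Aⱼ)ᴴ ρ (Aᵢ - Aⱼ) = 2 (m ∑ i, Aᵢᴴ ρ Aᵢ - Σᴴ ρ Σ)`
exhibits `m ∑ i, Aᵢᴴ ρ Aᵢ - Σᴴ ρ Σ` as half a sum of congruences of `ρ`,
hence positive semidefinite whenever `ρ` is. For Hermitian `cᵢ` summing to
the identity, `Σᴴ ρ Σ = ρ`.
-/

theorem Matrix.sum_sum_conjTranspose_sub_mul_mul_sub {R ι n p : Type*} [Ring R] [StarRing R]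
    [Fintype ι] [Fintype n] [Fintype p] (ρ : Matrix n n R) (A : ι → Matrix n p R) :
    ∑ i, ∑ j, (A i - A j)ᴴ * ρ * (A i - A j) =
      2 • (Fintype.card ι • ∑ i, (A i)ᴴ * ρ * A i - (∑ i, A i)ᴴ * ρ * ∑ i, A i) := by
  simp only [conjTranspose_sub, conjTranspose_sum, Matrix.sub_mul, Matrix.mul_sub,
    Matrix.sum_mul, Matrix.mul_sum, Finset.sum_sub_distrib, Finset.sum_const, Finset.card_univ]
  rw [← Finset.smul_sum, Finset.sum_comm (f := fun i j => (A i)ᴴ * ρ * A j)]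
  abel

theorem Matrix.PosSemidef.card_smul_sum_conjTranspose_mul_mul_sub {𝕜 ι n p : Type*} [RCLike 𝕜]
    [Fintype ι] [Fintype n] [Fintype p] {ρ : Matrix n n 𝕜} (hρ : ρ.PosSemidef)
    (A : ι → Matrix n p 𝕜) :
    (Fintype.card ι • ∑ i, (A i)ᴴ * ρ * A i - (∑ i, A i)ᴴ * ρ * ∑ i, A i).PosSemidef := by
  have hdouble := posSemidef_sum Finset.univ fun i _ =>
    posSemidef_sum Finset.univ fun j _ => hρ.conjTranspose_mul_mul_same (A i - A j)
  rw [sum_sum_conjTranspose_sub_mul_mul_sub] at hdouble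
  have := hdouble.smul (show (0 : ℝ) ≤ 2⁻¹ by norm_num)
  rwa [smul_comm, ← Nat.cast_smul_eq_nsmul ℝ, smul_smul, Nat.cast_ofNat,
    mul_inv_cancel₀ two_ne_zero, one_smul] at this

theorem pinching_inequality_general {d m : ℕ}
    (c : Fin m → Matrix (Fin d) (Fin d) ℂ)
    (hherm : ∀ i, (c i).IsHermitian)
    (hsum : ∑ i, c i = 1)
    (ρ : Matrix (Fin d) (Fin d) ℂ) (hρ : ρ.PosSemidef) :
    ((m : ℂ) • (∑ i, c i * ρ * c i) - ρ).PosSemidef := by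
  have key := hρ.card_smul_sum_conjTranspose_mul_mul_sub c
  simp only [hsum, conjTranspose_one, one_mul, mul_one, Fintype.card_fin, (hherm _).eq] at key
  rwa [← Nat.cast_smul_eq_nsmul ℂ] at key

/-- Pinching inequality: `m · Σᵢ cᵢ ρ cᵢ - ρ` is positive semidefinite. -/
theorem pinching_inequality {d m : ℕ}
    (c : Fin m → Matrix (Fin d) (Fin d) ℂ)
    (hherm : ∀ i, (c i).IsHermitian)
    (hidem : ∀ i, c i * c i = c i)
    (horth : ∀ i j, i ≠ j → c i * c j = 0)
    (hsum : ∑ i, c i = 1)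
    (ρ : Matrix (Fin d) (Fin d) ℂ) (hρ : ρ.PosSemidef) :
    ((m : ℂ) • (∑ i, c i * ρ * c i) - ρ).PosSemidef :=
  pinching_inequality_general c hherm hsum ρ hρ

end
end

section
/- Eigenvalue count for Kronecker powers: Let x be a Hermitian matrix in M_d(ℂ) having exactly k distinct eigenvalues. Then for every n ≥ 1, the n-fold Kronecker power x^{⊗n} ∈ M_{d^n}(ℂ) has at most (n+1)^{k−1} distinct eigenvalues. -/
open Matrix Filter
open scoped Kronecker ComplexOrder

noncomputable section

/-! If `x = U D U*` with `D = diag λ`, then `x^{⊗n} = U^{⊗n} D^{⊗n} (U^{⊗n})*`, so the eigenvalues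
of `x^{⊗n}` are the products `λ i₁ ⋯ λ iₙ`. Such a product only depends on how many of its factors
equal each of the `k` distinct eigenvalues; these multiplicities sum to `n`, so `k - 1` of them,
each in `{0, …, n}`, determine it. -/

open Finset

section WordProducts

variable {ι σ M : Type*} [Fintype σ] [CommMonoid M] [DecidableEq M]

theorem prod_eq_prod_pow_card_filter {E : Finset M} (g : σ → M) (hg : ∀ j, g j ∈ E) :
    ∏ j, g j = ∏ μ ∈ E, μ ^ #{j | g j = μ} := by
  rw [← prod_fiberwise_of_maps_to' (fun j _ => hg j) fun μ => μ]
  exact prod_congr rfl fun μ _ => prod_const μ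

theorem card_image_prod_comp_le [DecidableEq σ] [Fintype ι] (lam : ι → M) :
    #(univ.image fun f : σ → ι => ∏ j, lam (f j))
      ≤ (Fintype.card σ + 1) ^ (#(univ.image lam) - 1) := by
  rcases isEmpty_or_nonempty ι with hι | ⟨⟨i₀⟩⟩
  · calc #(univ.image fun f : σ → ι => ∏ j, lam (f j))
        ≤ Fintype.card (σ → ι) := card_image_le.trans_eq card_univ
      _ ≤ 1 := Fintype.card_le_one_iff_subsingleton.mpr inferInstance
      _ ≤ _ := Nat.one_le_pow _ _ (Nat.succ_pos _)
  set n := Fintype.card σ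
  set E := univ.image lam
  have hlam : ∀ i, lam i ∈ E := fun i => mem_image_of_mem lam (mem_univ i)
  obtain ⟨μ₀, hμ₀⟩ : E.Nonempty := ⟨lam i₀, hlam i₀⟩
  let count (f : σ → ι) : E.erase μ₀ → Fin (n + 1) :=
    fun μ => ⟨#{j | lam (f j) = μ}, Nat.lt_succ_of_le (card_filter_le _ _)⟩
  let F (c : E.erase μ₀ → Fin (n + 1)) : M :=
    μ₀ ^ (n - ∑ μ, (c μ : ℕ)) * ∏ μ : E.erase μ₀, (μ : M) ^ (c μ : ℕ)
  have hF : ∀ f, ∏ j, lam (f j) = F (count f) := by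
    intro f
    have hsum : #{j | lam (f j) = μ₀} + ∑ μ ∈ E.erase μ₀, #{j | lam (f j) = μ} = n := by
      rw [add_sum_erase E (fun μ => #{j | lam (f j) = μ}) hμ₀,
        ← card_eq_sum_card_fiberwise fun j _ => hlam (f j), card_univ]
    rw [prod_eq_prod_pow_card_filter _ fun j => hlam (f j), ← mul_prod_erase E _ hμ₀]
    simp only [F, count]
    rw [sum_coe_sort (E.erase μ₀) fun μ => #{j | lam (f j) = μ},
      prod_coe_sort (E.erase μ₀) fun μ => μ ^ #{j | lam (f j) = μ}]
    congr 2
    omega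
  calc #(univ.image fun f : σ → ι => ∏ j, lam (f j))
      ≤ #(univ.image F) := card_le_card fun x hx => by
        obtain ⟨f, -, rfl⟩ := mem_image.mp hx
        exact hF f ▸ mem_image_of_mem F (mem_univ _)
    _ ≤ Fintype.card (E.erase μ₀ → Fin (n + 1)) := card_image_le.trans_eq card_univ
    _ = (n + 1) ^ (#E - 1) := by
      rw [Fintype.card_fun, Fintype.card_coe, card_erase_of_mem hμ₀, Fintype.card_fin]

end WordProducts

section KroneckerPower

variable {d : ℕ}

theorem kronPow_mul (A B : Matrix (Fin d) (Fin d) ℂ) (n : ℕ) :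
    kronPow (A * B) n = kronPow A n * kronPow B n := by
  ext i j
  simp only [kronPow, of_apply, mul_apply]
  rw [prod_univ_sum, Fintype.piFinset_univ]
  exact sum_congr rfl fun f _ => prod_mul_distrib

theorem kronPow_diagonal (v : Fin d → ℂ) (n : ℕ) :
    kronPow (diagonal v) n = diagonal fun f : Fin n → Fin d => ∏ k, v (f k) := by
  ext i j
  by_cases h : i = j
  · subst h
    simp [kronPow]
  · obtain ⟨k, hk⟩ : ∃ k, i k ≠ j k := Function.ne_iff.mp h
    rw [diagonal_apply_ne _ h]
    exact prod_eq_zero (mem_univ k) (diagonal_apply_ne v hk)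

theorem kronPow_one (n : ℕ) : kronPow (1 : Matrix (Fin d) (Fin d) ℂ) n = 1 := by
  simp [← diagonal_one, kronPow_diagonal]

theorem kronPow_conjTranspose (A : Matrix (Fin d) (Fin d) ℂ) (n : ℕ) :
    (kronPow A n)ᴴ = kronPow Aᴴ n := by
  ext i j
  simp only [kronPow, conjTranspose_apply, of_apply, star_prod]

def kronPowStarMonoidHom (d n : ℕ) :
    Matrix (Fin d) (Fin d) ℂ →⋆* Matrix (Fin n → Fin d) (Fin n → Fin d) ℂ where
  toFun A := kronPow A n
  map_one' := kronPow_one n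
  map_mul' A B := kronPow_mul A B n
  map_star' A := (kronPow_conjTranspose A n).symm

variable {x : Matrix (Fin d) (Fin d) ℂ}

theorem isHermitian_kronPow (hx : x.IsHermitian) (n : ℕ) : (kronPow x n).IsHermitian := by
  rw [IsHermitian, kronPow_conjTranspose, hx.eq]

theorem Matrix.IsHermitian.spectrum_real_kronPow (hx : x.IsHermitian) (n : ℕ) :
    spectrum ℝ (kronPow x n) = Set.range fun f : Fin n → Fin d => ∏ j, hx.eigenvalues (f j) := by
  have hconj : kronPow x n = Unitary.conjStarAlgAut ℂ _
      (Unitary.map (kronPowStarMonoidHom d n) hx.eigenvectorUnitary)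
      (diagonal (RCLike.ofReal ∘ fun f : Fin n → Fin d => ∏ j, hx.eigenvalues (f j))) := by
    change kronPowStarMonoidHom d n x = _
    conv_lhs => rw [hx.spectral_theorem]
    simp only [Unitary.conjStarAlgAut_apply, map_mul, map_star, Unitary.coe_map]
    congr 2
    exact (kronPow_diagonal _ n).trans (by simp)
  ext μ
  rw [hconj, Unitary.conjStarAlgAut_apply, Unitary.spectrum_star_right_conjugate,
    ← spectrum.algebraMap_mem_iff ℂ]
  simp [-Complex.ofReal_prod]

theorem Matrix.IsHermitian.distinctEigs_eq {ι : Type*} [Fintype ι] [DecidableEq ι]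
    {A : Matrix ι ι ℂ} (hA : A.IsHermitian) : distinctEigs A = univ.image hA.eigenvalues :=
  dif_pos hA

theorem Matrix.IsHermitian.distinctEigs_kronPow (hx : x.IsHermitian) (n : ℕ) :
    distinctEigs (kronPow x n) = univ.image fun f : Fin n → Fin d => ∏ j, hx.eigenvalues (f j) := by
  apply coe_injective
  rw [(isHermitian_kronPow hx n).distinctEigs_eq, coe_image, coe_image, coe_univ, Set.image_univ,
    Set.image_univ, ← spectrum_real_eq_range_eigenvalues, hx.spectrum_real_kronPow]

end KroneckerPower

theorem kronPow_card_distinctEigs_general {d k : ℕ} (x : Matrix (Fin d) (Fin d) ℂ)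
    (hx : x.IsHermitian) (hk : (distinctEigs x).card = k) (n : ℕ) :
    (distinctEigs (kronPow x n)).card ≤ (n + 1) ^ (k - 1) := by
  rw [hx.distinctEigs_kronPow, ← hk, hx.distinctEigs_eq]
  simpa using card_image_prod_comp_le (σ := Fin n) hx.eigenvalues

/-- Eigenvalue count for Kronecker powers. -/
theorem kronPow_card_distinctEigs {d k : ℕ} (x : Matrix (Fin d) (Fin d) ℂ)
    (hx : x.IsHermitian) (hk : (distinctEigs x).card = k) (n : ℕ) (hn : 1 ≤ n) :
    (distinctEigs (kronPow x n)).card ≤ (n + 1) ^ (k - 1) :=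
  kronPow_card_distinctEigs_general x hx hk n

end
end
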